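/- If real numbers λ₁ ≥ λ₂ ≥ ... ≥ λₙ satisfy ∑ᵢ arctan(λᵢ) ≥ (n-2)·π/2, then λ₁ + (n-1)·λₙ ≥ 0. -/

import Mathlib

/-!
Write `a = λ₁`, `b = λₙ` and `c = n - 1`; the case `b ≥ 0` is trivial. If `b < 0` and
`a + c b < 0`, then `a < c μ` with `μ = -b > 0`, so
`∑ arctan λᵢ ≤ c arctan a + arctan b < c arctan (c μ) - arctan μ`.
Using `arctan y = π/2 - arctan y⁻¹` for `y > 0`, the right-hand side equals
`(c - 1) π/2 + arctan (c s) - c arctan s` with `s = (c μ)⁻¹`, which is at most `(c - 1) π/2`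
because `arctan` is concave on `[0, ∞)` and vanishes at `0`.
-/

open Real Finset Set

lemma ConcaveOn.map_mul_le_mul {f : ℝ → ℝ} (hf : ConcaveOn ℝ (Ici 0) f) (hf0 : 0 ≤ f 0)
    {c x : ℝ} (hc : 1 ≤ c) (hx : 0 ≤ x) : f (c * x) ≤ c * f x := by
  have hc0 : 0 < c := by linarith
  have hcomb := hf.2 (mem_Ici.2 le_rfl) (mem_Ici.2 (by positivity : 0 ≤ c * x))
    (sub_nonneg.2 (inv_le_one_of_one_le₀ hc)) (inv_nonneg.2 hc0.le) (sub_add_cancel 1 c⁻¹)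
  simp only [smul_eq_mul, mul_zero, zero_add, inv_mul_cancel_left₀ hc0.ne'] at hcomb
  have : c⁻¹ * f (c * x) ≤ f x := by nlinarith [inv_le_one_of_one_le₀ hc]
  rwa [inv_mul_le_iff₀ hc0] at this

lemma Real.concaveOn_arctan : ConcaveOn ℝ (Ici 0) arctan := by
  refine AntitoneOn.concaveOn_of_deriv (convex_Ici 0) continuous_arctan.continuousOn
    differentiable_arctan.differentiableOn ?_
  rw [interior_Ici]
  intro x hx y _ hxy
  simp only [deriv_arctan]
  gcongr
  exact hx.out.le

lemma Real.arctan_mul_le_mul_arctan {c x : ℝ} (hc : 1 ≤ c) (hx : 0 ≤ x) :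
    arctan (c * x) ≤ c * arctan x :=
  concaveOn_arctan.map_mul_le_mul arctan_zero.ge hc hx

lemma Real.mul_arctan_mul_sub_arctan_le {c μ : ℝ} (hc : 1 ≤ c) (hμ : 0 < μ) :
    c * arctan (c * μ) - arctan μ ≤ (c - 1) * (π / 2) := by
  have hcμ : 0 < c * μ := by positivity
  set s := (c * μ)⁻¹
  have hs : 0 < s := inv_pos.2 hcμ
  have h_cμ : arctan (c * μ) = π / 2 - arctan s := by
    rw [← arctan_inv_of_pos hs, inv_inv]
  have hcs : c * s = μ⁻¹ := by
    simp only [s, mul_inv, mul_inv_cancel_left₀ (by linarith : c ≠ 0)]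
  have h_μ : arctan μ = π / 2 - arctan (c * s) := by
    rw [← arctan_inv_of_pos (by positivity : 0 < c * s), hcs, inv_inv]
  have := arctan_mul_le_mul_arctan hc hs.le
  rw [h_cμ, h_μ]
  linarith

lemma Finset.sum_le_card_sub_one_mul_add {ι : Type*} [Fintype ι] (f : ι → ℝ) {M : ℝ}
    (hM : ∀ i, f i ≤ M) (j : ι) : ∑ i, f i ≤ ((Fintype.card ι : ℝ) - 1) * M + f j := by
  classical
  rw [← sum_erase_add _ _ (mem_univ j)]
  have hbound := sum_le_card_nsmul (univ.erase j) f M fun i _ ↦ hM i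
  rw [card_erase_of_mem (mem_univ j), card_univ, nsmul_eq_mul,
    Nat.cast_pred (Fintype.card_pos_iff.2 ⟨j⟩)] at hbound
  linarith

/-- If `λ₁ ≥ λ₂ ≥ ... ≥ λₙ` satisfy `∑ arctan λᵢ ≥ (n-2)π/2`, then `λ₁ + (n-1)λₙ ≥ 0`. -/
theorem stmt_2 (n : ℕ) (hn : 2 ≤ n) (lam : Fin n → ℝ)
    (hmono : ∀ i j : Fin n, i ≤ j → lam j ≤ lam i)
    (hsum : ((n : ℝ) - 2) * (Real.pi / 2) ≤ ∑ i, Real.arctan (lam i)) :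
    0 ≤ lam ⟨0, by omega⟩ + ((n : ℝ) - 1) * lam ⟨n - 1, by omega⟩ := by
  set a := lam ⟨0, by omega⟩
  set b := lam ⟨n - 1, by omega⟩
  set c := (n : ℝ) - 1
  have hc : 1 ≤ c := by
    have : (2 : ℝ) ≤ n := by exact_mod_cast hn
    linarith
  have hab : b ≤ a := hmono _ _ (Fin.mk_le_mk.2 (Nat.zero_le _))
  rcases le_or_gt 0 b with hb | hb
  · nlinarith
  by_contra! h
  have h_upper : ∑ i, arctan (lam i) ≤ c * arctan a + arctan b := by
    simpa using sum_le_card_sub_one_mul_add (arctan ∘ lam)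
      (fun i ↦ arctan_mono (hmono _ i (Fin.mk_le_mk.2 (Nat.zero_le _)))) ⟨n - 1, by omega⟩
  have h_a : c * arctan a < c * arctan (c * -b) :=
    mul_lt_mul_of_pos_left (arctan_strictMono (by linarith)) (by linarith)
  have h_key := mul_arctan_mul_sub_arctan_le hc (neg_pos.2 hb)
  rw [arctan_neg] at h_key
  linarith
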